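/- arXiv:1504.07048 — 5 statements merged into one kernel-verified Lean document; each statement's English description precedes it below -/
import Mathlib

section
/- For an infinite array (a_{i,j})_{i,j∈ℤ} of elements of a field, let D_{i,j}^ℓ denote the determinant of the ℓ×ℓ submatrix with rows i,…,i+ℓ−1 and columns j,…,j+ℓ−1, with the convention D_{i,j}^0 = 1. Then for all i,j ∈ ℤ and all ℓ ≥ 1, Sylvester's determinant identity holds: D_{i,j}^{ℓ+1} · D_{i+1,j+1}^{ℓ−1} = D_{i,j}^ℓ · D_{i+1,j+1}^ℓ − D_{i+1,j}^ℓ · D_{i,j+1}^ℓ. -/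
/-!
Let `M` be the `(ℓ+1)×(ℓ+1)` window with corner `(i, j)`, and let `B` be the identity matrix with
its first and last columns replaced by those of `adj M`. Then `M * B` is `M` with these two columns
replaced by `det M • e₀` and `det M • eₗ`, so `det M * det B = (det M)² * (inner minor)`, while
`det B` is the `2×2` corner minor of `adj M`, whose entries are, up to sign, the four `ℓ×ℓ`
corner minors of `M`. This is the Desnanot–Jacobi identity multiplied by `det M`; the factor is cancelled for the
generic matrix over `ℤ[X_rs]`, and the identity then specializes to every commutative ring.
-/

open Function

namespace Matrix

variable {R : Type*} [CommRing R]

theorem det_of_eq_one_off_range {n m : Type*} [Fintype n] [DecidableEq n] [Fintype m]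
    [DecidableEq m] (A : Matrix n n R) {c : m → n} (hc : Injective c) :
    det (of fun i j => if j ∈ Set.range c then A i j else (1 : Matrix n n R) i j) =
      det (A.submatrix c c) := by
  have hsplit : (of fun i j => if j ∈ Set.range c then A i j else (1 : Matrix n n R) i j) =
      1 + (A - 1).submatrix id c * (1 : Matrix n n R).submatrix c id := by
    ext i j
    by_cases hj : j ∈ Set.range c
    · obtain ⟨k, rfl⟩ := hj
      simp [mul_apply, one_apply, hc.eq_iff]
    · simp_all [mul_apply, one_apply]
  have hone : (A - 1).submatrix c c = A.submatrix c c - 1 := by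
    rw [← submatrix_one c hc]
    rfl
  rw [hsplit, det_one_add_mul_comm, ← submatrix_id_id (A - 1), ← one_mul (A - 1),
    ← submatrix_mul _ _ _ _ _ bijective_id]
  simp only [one_mul, submatrix_submatrix, id_comp]
  rw [hone, add_sub_cancel]

section Corners

variable {n : ℕ}

theorem mem_range_succ_comp_castSucc_iff {j : Fin (n + 2)} :
    j ∈ Set.range (Fin.succ ∘ Fin.castSucc : Fin n → _) ↔ j ≠ 0 ∧ j ≠ Fin.last (n + 1) := by
  constructor
  · rintro ⟨k, rfl⟩
    exact ⟨Fin.succ_ne_zero _, by simp [← Fin.succ_last]⟩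
  · rintro ⟨h0, hl⟩
    obtain ⟨k, rfl⟩ := Fin.exists_succ_eq.mpr h0
    obtain ⟨k', rfl⟩ := (Fin.exists_castSucc_eq (i := k)).mpr fun h => hl (by rw [h, Fin.succ_last])
    exact ⟨k', rfl⟩

theorem det_updateCol_zero_last_single (M : Matrix (Fin (n + 2)) (Fin (n + 2)) R) :
    ((M.updateCol 0 (Pi.single 0 1)).updateCol (Fin.last _) (Pi.single (Fin.last _) 1)).det =
      (M.submatrix (Fin.succ ∘ Fin.castSucc) (Fin.succ ∘ Fin.castSucc)).det := by
  rw [← det_of_eq_one_off_range M ((Fin.succ_injective _).comp (Fin.castSucc_injective _))]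
  congr 1
  ext i j
  simp only [updateCol_apply, of_apply, mem_range_succ_comp_castSucc_iff, one_apply,
    Pi.single_apply]
  split_ifs <;> simp_all

theorem det_one_updateCol_cramer_zero_last (M : Matrix (Fin (n + 2)) (Fin (n + 2)) R) :
    (((1 : Matrix _ _ R).updateCol 0 (M.cramer (Pi.single 0 1))).updateCol (Fin.last _)
        (M.cramer (Pi.single (Fin.last _) 1))).det =
      (M.submatrix Fin.succ Fin.succ).det * (M.submatrix Fin.castSucc Fin.castSucc).det -
        (M.submatrix Fin.castSucc Fin.succ).det * (M.submatrix Fin.succ Fin.castSucc).det := by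
  have hc : Injective ![(0 : Fin (n + 2)), Fin.last (n + 1)] := by
    intro a b
    fin_cases a <;> fin_cases b <;> simp [Fin.ext_iff]
  have hB : ((1 : Matrix _ _ R).updateCol 0 (M.cramer (Pi.single 0 1))).updateCol (Fin.last _)
        (M.cramer (Pi.single (Fin.last _) 1)) =
      of fun i j => if j ∈ Set.range ![0, Fin.last (n + 1)] then M.adjugate i j
        else (1 : Matrix _ _ R) i j := by
    ext i j
    simp only [updateCol_apply, of_apply, cramer_eq_adjugate_mulVec, mulVec_single_one,
      col_apply, range_cons, range_empty]
    split_ifs <;> simp_all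
  rw [hB, det_of_eq_one_off_range _ hc, det_fin_two]
  simp only [submatrix_apply, cons_val_zero, cons_val_one, cons_val_fin_one,
    adjugate_fin_succ_eq_det_submatrix, Fin.val_zero, Fin.val_last, Fin.succAbove_zero,
    Fin.succAbove_last, add_zero, zero_add, pow_zero, one_mul, Even.add_self, Even.neg_pow,
    one_pow]
  rw [mul_mul_mul_comm, ← mul_pow, neg_one_mul, neg_neg, one_pow, one_mul]

theorem desnanot_jacobi_mul_det (M : Matrix (Fin (n + 2)) (Fin (n + 2)) R) :
    M.det * (M.det * (M.submatrix (Fin.succ ∘ Fin.castSucc) (Fin.succ ∘ Fin.castSucc)).det) =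
      M.det * ((M.submatrix Fin.succ Fin.succ).det * (M.submatrix Fin.castSucc Fin.castSucc).det -
        (M.submatrix Fin.castSucc Fin.succ).det * (M.submatrix Fin.succ Fin.castSucc).det) := by
  rw [← det_one_updateCol_cramer_zero_last, ← det_mul, mul_updateCol, mul_updateCol, mul_one,
    mulVec_cramer, mulVec_cramer, det_updateCol_smul, updateCol_comm _ Fin.last_pos.ne,
    det_updateCol_smul, updateCol_comm _ Fin.last_pos.ne', det_updateCol_zero_last_single]

theorem desnanot_jacobi (M : Matrix (Fin (n + 2)) (Fin (n + 2)) R) :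
    M.det * (M.submatrix (Fin.succ ∘ Fin.castSucc) (Fin.succ ∘ Fin.castSucc)).det =
      (M.submatrix Fin.succ Fin.succ).det * (M.submatrix Fin.castSucc Fin.castSucc).det -
        (M.submatrix Fin.castSucc Fin.succ).det * (M.submatrix Fin.succ Fin.castSucc).det := by
  have hX := mul_left_cancel₀ (det_mvPolynomialX_ne_zero (Fin (n + 2)) ℤ)
    (desnanot_jacobi_mul_det (mvPolynomialX _ _ ℤ))
  have hM := congrArg (MvPolynomial.aeval fun p : Fin (n + 2) × Fin (n + 2) => M p.1 p.2) hX
  simp only [map_mul, map_sub, AlgHom.map_det, AlgHom.mapMatrix_apply, ← submatrix_map] at hM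
  simpa only [← AlgHom.mapMatrix_apply, mvPolynomialX_mapMatrix_aeval] using hM

end Corners

end Matrix

/-- The ℓ×ℓ adjacent minor of the array `a` at position `(i,j)`:
the determinant of the matrix with rows `i,…,i+ℓ-1` and columns `j,…,j+ℓ-1`.
For `ℓ = 0` this is the determinant of the empty matrix, which is `1`. -/
def adjMinor {K : Type*} [Field K] (a : ℤ → ℤ → K) (ℓ : ℕ) (i j : ℤ) : K :=
  Matrix.det (Matrix.of fun r s : Fin ℓ => a (i + (r : ℤ)) (j + (s : ℤ)))

theorem adjMinor_eq_det_submatrix {K : Type*} [Field K] (a : ℤ → ℤ → K) {ℓ N : ℕ}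
    {i j i' j' : ℤ} (f g : Fin ℓ → Fin N) (hf : ∀ r, i + (f r : ℤ) = i' + r)
    (hg : ∀ s, j + (g s : ℤ) = j' + s) :
    adjMinor a ℓ i' j' =
      ((Matrix.of fun r s : Fin N => a (i + r) (j + s)).submatrix f g).det := by
  unfold adjMinor
  congr 1
  ext r s
  simp [hf, hg]

/-- Sylvester's determinant identity for adjacent minors of a doubly infinite array. -/
theorem sylvester_identity {K : Type*} [Field K] (a : ℤ → ℤ → K) :
    ∀ (i j : ℤ) (ℓ : ℕ), 1 ≤ ℓ →
      adjMinor a (ℓ + 1) i j * adjMinor a (ℓ - 1) (i + 1) (j + 1)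
        = adjMinor a ℓ i j * adjMinor a ℓ (i + 1) (j + 1)
          - adjMinor a ℓ (i + 1) j * adjMinor a ℓ i (j + 1) := by
  intro i j ℓ hℓ
  obtain ⟨n, rfl⟩ := Nat.exists_eq_add_of_le' hℓ
  have hcs (x : ℤ) (r : Fin (n + 1)) : x + ((Fin.castSucc r : Fin (n + 2)) : ℤ) = x + r := by
    simp
  have hs (x : ℤ) (r : Fin (n + 1)) : x + ((r.succ : Fin (n + 2)) : ℤ) = x + 1 + r := by
    simp only [Fin.val_succ]
    push_cast
    ring
  have hin (x : ℤ) (r : Fin n) :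
      x + (((Fin.succ ∘ Fin.castSucc) r : Fin (n + 2)) : ℤ) = x + 1 + r := by
    simp only [comp_apply, Fin.val_succ, Fin.val_castSucc]
    push_cast
    ring
  rw [Nat.add_sub_cancel, adjMinor_eq_det_submatrix a _ _ (hin i) (hin j),
    adjMinor_eq_det_submatrix a _ _ (hcs i) (hcs j), adjMinor_eq_det_submatrix a _ _ (hs i) (hs j),
    adjMinor_eq_det_submatrix a _ _ (hs i) (hcs j), adjMinor_eq_det_submatrix a _ _ (hcs i) (hs j)]
  exact (Matrix.desnanot_jacobi _).trans (by ring)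
end

section
/- Let (a_{i,j})_{i,j∈ℤ} be an array over a field and D_{i,j}^ℓ the ℓ×ℓ adjacent minor at (i,j). Fix k ≥ 2, and suppose every adjacent k×k minor equals 1 (i.e., D_{i,j}^k = 1 for all i,j). If additionally all adjacent (k−1)×(k−1) minors D_{i,j}^{k−1} are nonzero, then all adjacent (k+1)×(k+1) minors vanish: D_{i,j}^{k+1} = 0 for all i,j. (Generic SL_k-friezes are tame.) -/
open Matrix in
/-- Generic SL_k-friezes are tame: if all adjacent k×k minors are 1 and all
adjacent (k-1)×(k-1) minors are nonzero, then all adjacent (k+1)×(k+1) minors vanish. -/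
theorem generic_imp_tame {K : Type*} [Field K] (k : ℕ) (hk : 2 ≤ k) (a : ℤ → ℤ → K)
    (hSL : ∀ i j : ℤ, adjMinor a k i j = 1)
    (hgen : ∀ i j : ℤ, adjMinor a (k - 1) i j ≠ 0) :
    ∀ i j : ℤ, adjMinor a (k + 1) i j = 0 := by
  obtain ⟨n, rfl⟩ : ∃ n, k = n + 1 := ⟨k - 1, by omega⟩
  simp only [Nat.add_sub_cancel] at hgen
  intro i j
  classical
  -- the (n+2)×(n+2) block
  set M : Matrix (Fin (n + 2)) (Fin (n + 2)) K :=
    Matrix.of (fun r s : Fin (n + 2) => a (i + (r : ℤ)) (j + (s : ℤ))) with hM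
  -- top and bottom (n+1)×(n+1) blocks of the left n+1 columns
  set T : Matrix (Fin (n + 1)) (Fin (n + 1)) K :=
    Matrix.of (fun r s : Fin (n + 1) => a (i + (r : ℤ)) (j + (s : ℤ))) with hT
  set B : Matrix (Fin (n + 1)) (Fin (n + 1)) K :=
    Matrix.of (fun r s : Fin (n + 1) => a (i + 1 + (r : ℤ)) (j + (s : ℤ))) with hB
  have hdetT : T.det = 1 := hSL i j
  have hdetB : B.det = 1 := by
    have := hSL (i + 1) j
    simpa [adjMinor] using this
  -- the top and bottom parts of the last column
  set v : Fin (n + 1) → K := fun r => a (i + (r : ℤ)) (j + (n + 1)) with hv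
  set w : Fin (n + 1) → K := fun r => a (i + 1 + (r : ℤ)) (j + (n + 1)) with hw
  set u : Fin (n + 1) → K := Matrix.cramer T v with hu
  set u' : Fin (n + 1) → K := Matrix.cramer B w with hu'
  have hTu : T *ᵥ u = v := by
    rw [hu, Matrix.mulVec_cramer, hdetT, one_smul]
  have hBu : B *ᵥ u' = w := by
    rw [hu', Matrix.mulVec_cramer, hdetB, one_smul]
  -- the shifted (n+1)×(n+1) blocks (columns j+1 .. j+n+1)
  set N : Matrix (Fin (n + 1)) (Fin (n + 1)) K :=
    Matrix.of (fun r s : Fin (n + 1) => a (i + (r : ℤ)) (j + 1 + (s : ℤ))) with hN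
  set N' : Matrix (Fin (n + 1)) (Fin (n + 1)) K :=
    Matrix.of (fun r s : Fin (n + 1) => a (i + 1 + (r : ℤ)) (j + 1 + (s : ℤ))) with hN'
  have hdetN : N.det = 1 := by
    have := hSL i (j + 1); simpa [adjMinor] using this
  have hdetN' : N'.det = 1 := by
    have := hSL (i + 1) (j + 1); simpa [adjMinor] using this
  -- the cyclic permutation
  set σ : Equiv.Perm (Fin (n + 1)) := (finRotate (n + 1)).symm with hσ
  have hσ0 : σ 0 = Fin.last n := by
    rw [hσ, Equiv.symm_apply_eq, finRotate_last]
  have hσs : ∀ t : Fin n, σ t.succ = t.castSucc := by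
    intro t
    rw [hσ, Equiv.symm_apply_eq, finRotate_succ_apply, Fin.coeSucc_eq_succ]
  have hup : T.updateCol 0 v = N.submatrix id σ := by
    ext r s
    refine Fin.cases ?_ (fun t => ?_) s
    · rw [Matrix.updateCol_self, Matrix.submatrix_apply, id, hσ0]
      simp only [hv, hN, Matrix.of_apply, Fin.val_last]
      ring_nf
    · rw [Matrix.updateCol_ne (Fin.succ_ne_zero t), Matrix.submatrix_apply, id, hσs t]
      simp only [hT, hN, Matrix.of_apply, Fin.val_succ, Fin.coe_castSucc]
      push_cast; ring_nf
  have hup' : B.updateCol 0 w = N'.submatrix id σ := by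
    ext r s
    refine Fin.cases ?_ (fun t => ?_) s
    · rw [Matrix.updateCol_self, Matrix.submatrix_apply, id, hσ0]
      simp only [hw, hN', Matrix.of_apply, Fin.val_last]
      ring_nf
    · rw [Matrix.updateCol_ne (Fin.succ_ne_zero t), Matrix.submatrix_apply, id, hσs t]
      simp only [hB, hN', Matrix.of_apply, Fin.val_succ, Fin.coe_castSucc]
      push_cast; ring_nf
  have hu0 : u 0 = u' 0 := by
    rw [hu, hu', Matrix.cramer_apply, Matrix.cramer_apply, hup, hup',
      Matrix.det_permute', Matrix.det_permute', hdetN, hdetN']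
  -- u = u'
  have huu : u = u' := by
    have hG : (Matrix.of fun r s : Fin n =>
        a (i + 1 + (r : ℤ)) (j + 1 + (s : ℤ))).det ≠ 0 := by
      have := hgen (i + 1) (j + 1); simpa [adjMinor] using this
    have hmid : (Matrix.of (fun r s : Fin n =>
        a (i + 1 + (r : ℤ)) (j + 1 + (s : ℤ)))) *ᵥ (fun s => (u - u') s.succ) = 0 := by
      funext ρ
      have h1 := congrFun hTu ρ.succ
      have h2 := congrFun hBu ρ.castSucc
      simp only [Matrix.mulVec, dotProduct, hT, hB, hv, hw, Matrix.of_apply,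
        Fin.val_succ, Fin.coe_castSucc] at h1 h2
      have e1 : (i + ((ρ : ℕ) + 1 : ℕ) : ℤ) = i + 1 + (ρ : ℤ) := by push_cast; ring
      rw [e1] at h1
      have key : ∑ s : Fin (n + 1), a (i + 1 + (ρ : ℤ)) (j + (s : ℤ)) * (u - u') s = 0 := by
        have : ∑ s : Fin (n + 1), a (i + 1 + (ρ : ℤ)) (j + (s : ℤ)) * (u - u') s =
            (∑ s : Fin (n + 1), a (i + 1 + (ρ : ℤ)) (j + (s : ℤ)) * u s) -
            ∑ s : Fin (n + 1), a (i + 1 + (ρ : ℤ)) (j + (s : ℤ)) * u' s := by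
          rw [← Finset.sum_sub_distrib]; congr 1; funext s; simp [mul_sub]
        rw [this, h1, h2, sub_self]
      rw [Fin.sum_univ_succ] at key
      have h0 : (u - u') 0 = 0 := by simp [hu0]
      rw [h0, mul_zero, zero_add] at key
      simp only [Matrix.mulVec, dotProduct, Matrix.of_apply, Pi.zero_apply]
      rw [← key]
      congr 1; funext s
      congr 2
      push_cast [Fin.val_succ]; ring
    have hz := Matrix.eq_zero_of_mulVec_eq_zero hG hmid
    funext s
    refine Fin.cases ?_ (fun t => ?_) s
    · exact hu0
    · have := congrFun hz t
      simpa [sub_eq_zero] using this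
  -- the kernel vector
  set U : Fin (n + 2) → K := Fin.snoc u (-1) with hU
  have hMU : M *ᵥ U = 0 := by
    funext r
    simp only [Matrix.mulVec, dotProduct, Pi.zero_apply]
    rw [Fin.sum_univ_castSucc]
    simp only [hU, Fin.snoc_castSucc, Fin.snoc_last]
    refine Fin.lastCases ?_ (fun ρ => ?_) r
    · have h2 := congrFun hBu (Fin.last n)
      simp only [Matrix.mulVec, dotProduct, hB, hw, Matrix.of_apply, Fin.val_last] at h2
      rw [← huu] at h2
      have : ∑ s : Fin (n + 1), M (Fin.last (n + 1)) s.castSucc * u s =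
          a (i + 1 + (n : ℤ)) (j + (n + 1)) := by
        rw [← h2]; congr 1; funext s
        simp only [hM, Matrix.of_apply, Fin.coe_castSucc, Fin.val_last]
        congr 2; push_cast; ring
      rw [this]
      have : M (Fin.last (n + 1)) (Fin.last (n + 1)) = a (i + 1 + (n : ℤ)) (j + (n + 1)) := by
        simp only [hM, Matrix.of_apply, Fin.val_last]; congr 1; push_cast; ring
      rw [this]; ring
    · have h1 := congrFun hTu ρ
      simp only [Matrix.mulVec, dotProduct, hT, hv, Matrix.of_apply] at h1
      have : ∑ s : Fin (n + 1), M ρ.castSucc s.castSucc * u s =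
          a (i + (ρ : ℤ)) (j + (n + 1)) := by
        rw [← h1]
        refine Finset.sum_congr rfl fun s _ => ?_
        simp [hM, Fin.coe_castSucc]
      rw [this]
      have : M ρ.castSucc (Fin.last (n + 1)) = a (i + (ρ : ℤ)) (j + (n + 1)) := by
        simp only [hM, Matrix.of_apply, Fin.coe_castSucc, Fin.val_last]
        norm_cast
      rw [this]; ring
  have hUne : U ≠ 0 := by
    intro h
    have := congrFun h (Fin.last (n + 1))
    simp [hU] at this
  have : M.det = 0 := by
    rw [← Matrix.exists_mulVec_eq_zero_iff]
    exact ⟨U, hUne, hMU⟩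
  simpa [adjMinor, hM] using this
end

section
/- Let k ≥ 2 and let F = (a_{i,j})_{i,j∈ℤ} be an array over a field satisfying: every adjacent k×k minor equals 1, and every adjacent (k+1)×(k+1) minor equals 0 (tame SL_k-frieze). Suppose further that for each i, the k×k matrices F_{i,j} := (a_{i+r,j+s})_{0≤r,s≤k−1} are invertible. Then the matrix B_j := F_{i,j}^{−1} F_{i,j+1} is independent of i. -/
/-!
Tameness says that the row `i + k` of the frieze, over the columns `j, …, j + k`, is a linear
combination of the `k` rows above it: the corresponding `(k+1)×(k+1)` minor vanishes while its
upper-left `k×k` minor `F i j` does not. Hence the identity `F i j * B = F i (j+1)`, which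
concerns rows `i, …, i + k - 1`, extends to row `i + k`, i.e. `F (i+1) j * B = F (i+1) (j+1)`.
So `B = (F i j)⁻¹ * F i (j+1)` is `1`-periodic in `i`, hence constant.
-/

namespace Matrix

theorem vecMul_eq_vecMul_submatrix_castSucc_add {R : Type*} [NonUnitalNonAssocSemiring R]
    {n : ℕ} {m : Type*} (c : Fin (n + 1) → R) (M : Matrix (Fin (n + 1)) m R) :
    c ᵥ* M =
      (c ∘ Fin.castSucc) ᵥ* M.submatrix Fin.castSucc id + c (Fin.last n) • M (Fin.last n) := by
  ext s
  simp [vecMul, dotProduct, Fin.sum_univ_castSucc]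

theorem exists_vecMul_eq_last_row_of_det_eq_zero {K : Type*} [Field K] {n : ℕ}
    {M : Matrix (Fin (n + 1)) (Fin (n + 1)) K} (hM : M.det = 0)
    (hA : (M.submatrix Fin.castSucc Fin.castSucc).det ≠ 0) :
    ∃ μ : Fin n → K, μ ᵥ* M.submatrix Fin.castSucc id = M (Fin.last n) := by
  obtain ⟨c, hc0, hc⟩ := exists_vecMul_eq_zero_iff.mpr hM
  rw [vecMul_eq_vecMul_submatrix_castSucc_add] at hc
  -- Otherwise `c` would be a dependence among the first `n` rows, already visible on the
  -- invertible block of their first `n` columns.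
  have hlast : c (Fin.last n) ≠ 0 := by
    intro h
    rw [h, zero_smul, add_zero] at hc
    have hinit : c ∘ Fin.castSucc = 0 := by
      by_contra hne
      refine hA (exists_vecMul_eq_zero_iff.mp ⟨_, hne, ?_⟩)
      ext s
      exact congrFun hc s.castSucc
    exact hc0 (funext (Fin.lastCases h (congrFun hinit)))
  refine ⟨-(c (Fin.last n))⁻¹ • (c ∘ Fin.castSucc), ?_⟩
  rw [smul_vecMul, eq_neg_of_add_eq_zero_left hc, smul_neg, neg_smul, neg_neg, smul_smul,
    inv_mul_cancel₀ hlast, one_smul]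

theorem mul_eq_of_last_row_eq_vecMul {R : Type*} [NonUnitalSemiring R] {n : ℕ} {m p : Type*}
    [Fintype m] {P : Matrix (Fin (n + 1)) m R} {Q : Matrix (Fin (n + 1)) p R} {X : Matrix m p R}
    (μ : Fin n → R) (hX : P.submatrix Fin.castSucc id * X = Q.submatrix Fin.castSucc id)
    (hP : P (Fin.last n) = μ ᵥ* P.submatrix Fin.castSucc id)
    (hQ : Q (Fin.last n) = μ ᵥ* Q.submatrix Fin.castSucc id) :
    P * X = Q := by
  ext r s
  induction r using Fin.lastCases with
  | last =>
    have h := congrFun (congrArg (μ ᵥ* ·) hX) s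
    simp only [← vecMul_vecMul, ← hP, ← hQ] at h
    exact h
  | cast r => exact congrFun (congrFun hX r) s

end Matrix

open Matrix

def window {α : Type*} (a : ℤ → ℤ → α) (n : ℕ) (i j : ℤ) : Matrix (Fin n) (Fin n) α :=
  Matrix.of fun r s => a (i + r) (j + s)

theorem window_succ_row_mul_eq {K : Type*} [Field K] {a : ℤ → ℤ → K} {n : ℕ} {i j : ℤ}
    {X : Matrix (Fin n) (Fin n) K} (htame : (window a (n + 1) i j).det = 0)
    (hdet : (window a n i j).det ≠ 0) (hX : window a n i j * X = window a n i (j + 1)) :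
    window a n (i + 1) j * X = window a n (i + 1) (j + 1) := by
  set M := window a (n + 1) i j
  have h₀₀ : M.submatrix Fin.castSucc Fin.castSucc = window a n i j := by
    ext r s; simp [M, window]
  have h₀₁ : M.submatrix Fin.castSucc Fin.succ = window a n i (j + 1) := by
    ext r s; simp [M, window, add_right_comm, add_assoc]
  have h₁₀ : M.submatrix Fin.succ Fin.castSucc = window a n (i + 1) j := by
    ext r s; simp [M, window, add_right_comm, add_assoc]
  have h₁₁ : M.submatrix Fin.succ Fin.succ = window a n (i + 1) (j + 1) := by
    ext r s; simp [M, window, add_right_comm, add_assoc]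
  obtain ⟨μ, hμ⟩ := exists_vecMul_eq_last_row_of_det_eq_zero htame (h₀₀ ▸ hdet)
  have hcols : M.submatrix id Fin.castSucc * X = M.submatrix id Fin.succ :=
    mul_eq_of_last_row_eq_vecMul μ (by rwa [← h₀₀, ← h₀₁] at hX)
      (funext fun s => (congrFun hμ s.castSucc).symm) (funext fun s => (congrFun hμ s.succ).symm)
  have hrows := congrArg (·.submatrix Fin.succ id) hcols
  simp only [submatrix_mul _ _ Fin.succ id id Function.bijective_id, submatrix_id_id,
    submatrix_submatrix, Function.id_comp] at hrows
  rwa [← h₁₀, ← h₁₁]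

theorem B_independent_of_row_general {K : Type*} [Field K] (k : ℕ)
    (a : ℤ → ℤ → K) (F : ℤ → ℤ → Matrix (Fin k) (Fin k) K)
    (hF : ∀ i j : ℤ, F i j = Matrix.of fun r s : Fin k => a (i + (r : ℤ)) (j + (s : ℤ)))
    (htame : ∀ i j : ℤ,
      Matrix.det (Matrix.of fun r s : Fin (k + 1) => a (i + (r : ℤ)) (j + (s : ℤ))) = 0)
    (hinv : ∀ i j : ℤ, IsUnit (F i j)) :
    ∀ i i' j : ℤ, (F i j)⁻¹ * F i (j + 1) = (F i' j)⁻¹ * F i' (j + 1) := by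
  intro i i' j
  have hFw : ∀ i j, F i j = window a k i j := hF
  have hdet : ∀ i, IsUnit (F i j).det := fun i => (isUnit_iff_isUnit_det _).mp (hinv i j)
  have hperiodic : Function.Periodic (fun i => (F i j)⁻¹ * F i (j + 1)) 1 := by
    intro i
    set B := (F i j)⁻¹ * F i (j + 1)
    have hB : window a k i j * B = window a k i (j + 1) := by
      rw [← hFw, ← hFw]; exact mul_nonsing_inv_cancel_left _ _ (hdet i)
    have hstep := window_succ_row_mul_eq (htame i j) (hFw i j ▸ (hdet i).ne_zero) hB
    rw [← hFw, ← hFw] at hstep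
    show (F (i + 1) j)⁻¹ * F (i + 1) (j + 1) = B
    rw [← hstep, nonsing_inv_mul_cancel_left _ _ (hdet (i + 1))]
  simpa using (hperiodic.int_mul_eq i).trans (hperiodic.int_mul_eq i').symm

/-- For a tame SL_k-frieze, the matrix `F_{i,j}⁻¹ * F_{i,j+1}` does not depend
on the row index `i`. -/
theorem B_independent_of_row {K : Type*} [Field K] (k : ℕ) (hk : 2 ≤ k)
    (a : ℤ → ℤ → K) (F : ℤ → ℤ → Matrix (Fin k) (Fin k) K)
    (hF : ∀ i j : ℤ, F i j = Matrix.of fun r s : Fin k => a (i + (r : ℤ)) (j + (s : ℤ)))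
    (hSL : ∀ i j : ℤ, (F i j).det = 1)
    (htame : ∀ i j : ℤ,
      Matrix.det (Matrix.of fun r s : Fin (k + 1) => a (i + (r : ℤ)) (j + (s : ℤ))) = 0)
    (hinv : ∀ i j : ℤ, IsUnit (F i j)) :
    ∀ i i' j : ℤ, (F i j)⁻¹ * F i (j + 1) = (F i' j)⁻¹ * F i' (j + 1) :=
  B_independent_of_row_general k a F hF htame hinv
end

section
/- Let F = (a_{i,j}) be a tame SL_k-frieze of height n over a field, with invertible k×k adjacent submatrices F_{i,j}, and let B_j = F_{i,j}^{−1}F_{i,j+1} (independent of i). Then the sequence (B_j)_{j∈ℤ} is periodic with period n+k+1, and B_1 B_2 ⋯ B_{n+k+1} = (−1)^{k−1} I. -/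
/-- For a tame SL_k-frieze of height `n` (in the coordinates where row `i` has
ones at columns `i` and `i+n+1`, zeros at the `k-1` following columns, extension
of period `n+k+1` with sign `(-1)^{k-1}`, all adjacent `k×k` minors `1` and all
adjacent `(k+1)×(k+1)` minors `0`), with invertible adjacent `k×k` submatrices
`F i j`, the matrices `B j = (F 0 j)⁻¹ * F 0 (j+1)` are periodic with period
`n+k+1` and `B 1 * B 2 * ⋯ * B (n+k+1) = (-1)^{k-1} • 1`. -/
theorem B_periodic_and_product {K : Type*} [Field K] (k n : ℕ) (hk : 2 ≤ k) (hn : 1 ≤ n)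
    (a : ℤ → ℤ → K) (F : ℤ → ℤ → Matrix (Fin k) (Fin k) K)
    (hF : ∀ i j : ℤ, F i j = Matrix.of fun r s : Fin k => a (i + (r : ℤ)) (j + (s : ℤ)))
    (hone : ∀ i : ℤ, a i i = 1)
    (hone' : ∀ i : ℤ, a i (i + ((n : ℤ) + 1)) = 1)
    (hzero : ∀ i j : ℤ, i + ((n : ℤ) + 1) < j → j < i + ((n : ℤ) + (k : ℤ) + 1) → a i j = 0)
    (hext : ∀ i j : ℤ, a i (j + ((n : ℤ) + (k : ℤ) + 1)) = (-1 : K) ^ (k - 1) * a i j)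
    (hSL : ∀ i j : ℤ, (F i j).det = 1)
    (htame : ∀ i j : ℤ,
      Matrix.det (Matrix.of fun r s : Fin (k + 1) => a (i + (r : ℤ)) (j + (s : ℤ))) = 0)
    (hinv : ∀ i j : ℤ, IsUnit (F i j))
    (B : ℤ → Matrix (Fin k) (Fin k) K)
    (hB : ∀ j : ℤ, B j = (F 0 j)⁻¹ * F 0 (j + 1)) :
    (∀ j : ℤ, B (j + ((n : ℤ) + (k : ℤ) + 1)) = B j) ∧
    ((List.range (n + k + 1)).map fun t => B (1 + (t : ℤ))).prod
      = ((-1 : K) ^ (k - 1)) • (1 : Matrix (Fin k) (Fin k) K) := by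
  set N : ℤ := (n : ℤ) + (k : ℤ) + 1 with hN
  set c : K := (-1 : K) ^ (k - 1) with hc
  have hcc : c * c = 1 := by
    rw [hc, ← pow_add, ← two_mul, pow_mul]; simp
  haveI : Invertible c := ⟨c, hcc, hcc⟩
  have hdet : ∀ j : ℤ, IsUnit (F 0 j).det := fun j =>
    (Matrix.isUnit_iff_isUnit_det _).mp (hinv 0 j)
  have hshift : ∀ j : ℤ, F 0 (j + N) = c • F 0 j := by
    intro j
    rw [hF, hF]
    ext r s
    simp only [Matrix.smul_apply, Matrix.of_apply, smul_eq_mul]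
    have : j + N + (s : ℤ) = (j + (s : ℤ)) + N := by ring
    rw [this, hext]
  constructor
  · intro j
    rw [hB, hB]
    have h1 : j + N + 1 = (j + 1) + N := by ring
    have hinvsmul : (c • F 0 j)⁻¹ = c • (F 0 j)⁻¹ :=
      Matrix.inv_eq_left_inv (by
        rw [Matrix.smul_mul, Matrix.mul_smul, smul_smul,
          Matrix.nonsing_inv_mul _ (hdet j), hcc, one_smul])
    rw [hshift j, h1, hshift (j + 1), hinvsmul, Matrix.smul_mul, Matrix.mul_smul,
      smul_smul, hcc, one_smul]
  · have key : ∀ m : ℕ, ((List.range m).map fun t => B (1 + (t : ℤ))).prod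
        = (F 0 1)⁻¹ * F 0 (1 + (m : ℤ)) := by
      intro m
      induction m with
      | zero => simp [Matrix.nonsing_inv_mul _ (hdet 1)]
      | succ m ih =>
        have hsplit : ((List.range (m + 1)).map fun t => B (1 + (t : ℤ))) =
            ((List.range m).map fun t => B (1 + (t : ℤ))) ++ [B (1 + (m : ℤ))] := by
          simp [List.range_succ]
        rw [hsplit, List.prod_append, List.prod_singleton]
        rw [ih, hB, Matrix.mul_assoc, ← Matrix.mul_assoc (F 0 (1 + (m : ℤ))),
          Matrix.mul_nonsing_inv _ (hdet _), Matrix.one_mul]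
        congr 2
    rw [key]
    have h1 : (1 : ℤ) + ((n + k + 1 : ℕ) : ℤ) = 1 + N := by push_cast [hN]; ring
    rw [h1, hshift 1, Matrix.mul_smul, Matrix.nonsing_inv_mul _ (hdet 1)]
end

section
/- Let F = (a_{i,j}) be a tame SL_k-frieze over a field, and let F̂ be the dual array defined by replacing each entry a_{i,j} with the adjacent (k−1)×(k−1) minor D_{i,j}^{k−1}. Then F is generic (all its adjacent (k−1)×(k−1) minors relevant to the frieze are nonzero) if and only if F is nonzero (all interior entries c_{i,j} are nonzero). -/
open Matrix Submodule Set

theorem linearIndependent_iff_succAbove {K V : Type*} [DivisionRing K] [AddCommGroup V]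
    [Module K V] {n : ℕ} (v : Fin (n + 1) → V) (l : Fin (n + 1)) :
    LinearIndependent K v ↔ LinearIndependent K (fun r => v (l.succAbove r)) ∧
      v l ∉ span K (range fun r => v (l.succAbove r)) := by
  rw [← linearIndependent_equiv (finSuccEquiv' l).symm, linearIndependent_option]
  simp [Function.comp_def]

theorem row_mem_span_of_det_eq_zero {K : Type*} [Field K] {n : ℕ}
    (A : Matrix (Fin (n + 1)) (Fin (n + 1)) K) (l : Fin (n + 1)) (f : Fin n → Fin (n + 1))
    (hA : A.det = 0) (hminor : (A.submatrix l.succAbove f).det ≠ 0) :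
    A l ∈ span K (range fun r => A (l.succAbove r)) := by
  have hrows : LinearIndependent K fun r => A (l.succAbove r) :=
    LinearIndependent.of_comp (LinearMap.funLeft K K f) <| linearIndependent_rows_iff_isUnit.2 <|
      (isUnit_iff_isUnit_det _).2 (isUnit_iff_ne_zero.2 hminor)
  by_contra h
  have hunit :=
    linearIndependent_rows_iff_isUnit.1 ((linearIndependent_iff_succAbove A l).2 ⟨hrows, h⟩)
  simp [isUnit_iff_isUnit_det, hA] at hunit

theorem det_eq_det_submatrix_castSucc_of_last_row {R : Type*} [CommRing R] {n : ℕ}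
    (A : Matrix (Fin (n + 1)) (Fin (n + 1)) R) (h : A (Fin.last n) = Pi.single (Fin.last n) 1) :
    A.det = (A.submatrix Fin.castSucc Fin.castSucc).det := by
  rw [det_succ_row A (Fin.last n), h]
  simp [Pi.single_apply, Fin.succAbove_last]

theorem mem_span_succAbove_of_window_dets {K : Type*} [Field K] {n : ℕ}
    (b : Fin (n + 1) → ℤ → K) (l : Fin (n + 1))
    (hdep : ∀ q : ℤ, (of fun r s : Fin (n + 1) => b r (q + s)).det = 0)
    (hind : ∀ q : ℤ, (of fun r s : Fin n => b (l.succAbove r) (q + s)).det ≠ 0) :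
    b l ∈ span K (range fun r => b (l.succAbove r)) := by
  have hlocal : ∀ q : ℤ, ∃ μ : Fin n → K,
      ∀ s : Fin (n + 1), ∑ r, μ r * b (l.succAbove r) (q + s) = b l (q + s) := by
    intro q
    obtain ⟨μ, hμ⟩ := (mem_span_range_iff_exists_fun K).1 <|
      row_mem_span_of_det_eq_zero _ l Fin.castSucc (hdep q) (hind q)
    exact ⟨μ, fun s => by simpa [Finset.sum_apply] using congrFun hμ s⟩
  choose μ hμ using hlocal
  -- consecutive windows overlap in `n` columns, on which the coefficients are unique
  have hstep : ∀ q, μ (q + 1) = μ q := by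
    intro q
    refine vecMul_injective_of_isUnit ((isUnit_iff_isUnit_det _).2
      (isUnit_iff_ne_zero.2 (hind (q + 1)))) (funext fun s => ?_)
    have hcol : q + 1 + ((s : ℕ) : ℤ) = q + ((s.succ : ℕ) : ℤ) := by
      rw [Fin.val_succ]; push_cast; ring
    have h := hμ (q + 1) s.castSucc
    rw [Fin.val_castSucc, hcol, ← hμ q s.succ] at h
    simpa [vecMul, dotProduct, mul_comm, hcol] using h
  have hconst : ∀ q, μ q = μ 0 := by
    intro q
    induction q using Int.induction_on with
    | zero => rfl
    | succ q ih => rw [hstep, ih]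
    | pred q ih => rw [← ih, ← hstep, sub_add_cancel]
  refine (mem_span_range_iff_exists_fun K).2 ⟨μ 0, funext fun c => ?_⟩
  simpa [Finset.sum_apply, hconst c] using hμ c 0

namespace Frieze

variable {K : Type*} [Field K] (a : ℤ → ℤ → K)

def rowSpan (k : ℕ) (i : ℤ) : Submodule K (ℤ → K) :=
  span K (range fun t : Fin k => a (i + t))

variable {a} {m : ℕ}

theorem rowSpan_succ (hminor : ∀ i j, adjMinor a (m + 1) i j ≠ 0)
    (htame : ∀ i j, adjMinor a (m + 1 + 1) i j = 0) (i : ℤ) :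
    rowSpan a (m + 1) (i + 1) = rowSpan a (m + 1) i := by
  have hlast : a (i + (m + 1)) ∈ rowSpan a (m + 1) i := by
    simpa [rowSpan] using mem_span_succAbove_of_window_dets (fun r : Fin (m + 2) => a (i + r))
      (Fin.last (m + 1)) (htame i) (fun q => by simpa [adjMinor] using hminor i q)
  have hfirst : a i ∈ rowSpan a (m + 1) (i + 1) := by
    have h := mem_span_succAbove_of_window_dets (fun r : Fin (m + 2) => a (i + r)) 0 (htame i)
      (fun q => by simpa [adjMinor, add_assoc, add_comm (1 : ℤ)] using hminor (i + 1) q)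
    have hrows : (fun r : Fin (m + 1) => a (i + ((Fin.succAbove 0 r : ℕ) : ℤ))) =
        fun t : Fin (m + 1) => a (i + 1 + t) := by
      funext t
      rw [Fin.succAbove_zero, Fin.val_succ]
      push_cast; ring_nf
    rw [hrows] at h
    simpa [rowSpan] using h
  apply le_antisymm
  · rw [rowSpan, span_le, range_subset_iff]
    intro t
    induction t using Fin.lastCases with
    | last =>
      rw [SetLike.mem_coe, Fin.val_last, show i + 1 + (m : ℤ) = i + (m + 1) by ring]
      exact hlast
    | cast t => exact subset_span ⟨t.succ, by simp; ring_nf⟩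
  · rw [rowSpan, span_le, range_subset_iff]
    intro t
    induction t using Fin.cases with
    | zero => simpa using hfirst
    | succ t => exact subset_span ⟨t.castSucc, by simp; ring_nf⟩

theorem mem_rowSpan (hminor : ∀ i j, adjMinor a (m + 1) i j ≠ 0)
    (htame : ∀ i j, adjMinor a (m + 1 + 1) i j = 0) (i x : ℤ) :
    a x ∈ rowSpan a (m + 1) i := by
  have hconst : ∀ i, rowSpan a (m + 1) i = rowSpan a (m + 1) 0 := by
    intro i
    induction i using Int.induction_on with
    | zero => rfl
    | succ i ih => rw [rowSpan_succ hminor htame, ih]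
    | pred i ih => rw [← ih, ← rowSpan_succ hminor htame, sub_add_cancel]
  rw [hconst i, ← hconst x]
  exact subset_span ⟨0, by simp⟩

theorem adjMinor_eq_neg_one_pow_mul (hSL : ∀ i j, adjMinor a (m + 1) i j = 1)
    (htame : ∀ i j, adjMinor a (m + 1 + 1) i j = 0) (hone : ∀ i, a i i = 1)
    (hband : ∀ p c : ℤ, p - (m + 1) < c → c < p → a p c = 0)
    (hcorner : ∀ p : ℤ, a p (p - (m + 1)) = (-1) ^ m) (i j : ℤ) :
    adjMinor a m i j = (-1) ^ m * a (j + m) (i - 1) := by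
  obtain ⟨μ, hμ⟩ := (mem_span_range_iff_exists_fun K).1 <|
    mem_rowSpan (fun i j => by simp [hSL]) htame i (j + m)
  have hcoeff_col : a (j + m) (i - 1) = (-1) ^ m * μ (Fin.last m) := by
    rw [← hμ, Finset.sum_apply, Fin.sum_univ_castSucc]
    have hzero : ∀ t : Fin m, a (i + t) (i - 1) = 0 := fun t =>
      hband _ _ (by omega) (by omega)
    simp only [Pi.smul_apply, smul_eq_mul, Fin.val_castSucc, Fin.val_last, hzero, mul_zero,
      Finset.sum_const_zero, zero_add]
    rw [show i - 1 = i + m - (m + 1) by ring, hcorner, mul_comm]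
  have hcoeff_minor : μ (Fin.last m) = adjMinor a m i j := by
    set B : Matrix (Fin (m + 1)) (Fin (m + 1)) K := of fun r s => a (i + r) (j + s)
    have hrow : ∑ t, μ t • B t = fun s : Fin (m + 1) => a (j + m) (j + s) := by
      rw [← hμ]; ext s; simp [B, Finset.sum_apply]
    have hlast : B.updateRow (Fin.last m) (∑ t, μ t • B t) (Fin.last m) =
        Pi.single (Fin.last m) 1 := by
      rw [updateRow_self, hrow]
      ext s
      induction s using Fin.lastCases with
      | last => simp [hone]
      | cast s => simp [hband (j + m) (j + s) (by omega) (by omega)]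
    have hsub : (B.updateRow (Fin.last m) (∑ t, μ t • B t)).submatrix Fin.castSucc
        Fin.castSucc = of fun r s : Fin m => a (i + r) (j + s) := by
      ext r s
      simp [B]
    have h := det_updateRow_sum B (Fin.last m) μ
    rw [det_eq_det_submatrix_castSucc_of_last_row _ hlast, hsub, show B.det = 1 from hSL i j] at h
    simpa [adjMinor] using h.symm
  rw [hcoeff_col, hcoeff_minor, ← mul_assoc, ← pow_add, ← two_mul, pow_mul]
  simp

variable {n k : ℕ}

theorem apply_eq_zero_of_sub_lt_of_lt
    (hzero : ∀ i j : ℤ, i + ((n : ℤ) + 1) < j → j < i + ((n : ℤ) + (k : ℤ) + 1) → a i j = 0)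
    (hext : ∀ i j : ℤ, a i (j + ((n : ℤ) + (k : ℤ) + 1)) = (-1 : K) ^ (k - 1) * a i j)
    {p c : ℤ} (h1 : p - k < c) (h2 : c < p) : a p c = 0 := by
  have h := hext p c
  rw [hzero p _ (by omega) (by omega)] at h
  exact (mul_eq_zero.1 h.symm).resolve_left (by simp)

theorem apply_sub_eq_neg_one_pow (hone' : ∀ i : ℤ, a i (i + ((n : ℤ) + 1)) = 1)
    (hext : ∀ i j : ℤ, a i (j + ((n : ℤ) + (k : ℤ) + 1)) = (-1 : K) ^ (k - 1) * a i j) (p : ℤ) :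
    a p (p - k) = (-1) ^ (k - 1) := by
  have h := hext p (p - k)
  rw [show p - k + (n + k + 1) = p + (n + 1) by ring, hone'] at h
  calc a p (p - k) = (-1) ^ (k - 1) * ((-1) ^ (k - 1) * a p (p - k)) := by
        rw [← mul_assoc, ← pow_add, ← two_mul, pow_mul]; simp
    _ = (-1) ^ (k - 1) := by rw [← h, mul_one]

end Frieze

open Frieze

theorem Int.one_le_emod_and_emod_le_of_add_eq {N n x y : ℤ} (hnN : n < N)
    (hxy : x + y = n + 1 - N) (h1 : 1 ≤ x % N) (h2 : x % N ≤ n) : 1 ≤ y % N ∧ y % N ≤ n := by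
  have hy : y = (n + 1 - x % N) + N * (-(x / N) - 1) := by
    linear_combination hxy + Int.emod_def x N
  rw [hy, Int.add_mul_emod_self_left, Int.emod_eq_of_lt (by omega) (by omega)]
  omega

/-- Row `i` has its ones at columns `i` and `i + n + 1`; the interior entries of the frieze are
those in columns `j` with `(j - i) mod (n + k + 1) ∈ {1, …, n}`, and the same positions index the
interior of the dual frieze of `(k-1)×(k-1)` minors. -/
theorem tame_generic_iff_nonzero_general {K : Type*} [Field K] (k n : ℕ) (hk : 2 ≤ k)
    (a : ℤ → ℤ → K)
    (hone : ∀ i : ℤ, a i i = 1)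
    (hone' : ∀ i : ℤ, a i (i + ((n : ℤ) + 1)) = 1)
    (hzero : ∀ i j : ℤ, i + ((n : ℤ) + 1) < j → j < i + ((n : ℤ) + (k : ℤ) + 1) → a i j = 0)
    (hext : ∀ i j : ℤ, a i (j + ((n : ℤ) + (k : ℤ) + 1)) = (-1 : K) ^ (k - 1) * a i j)
    (hSL : ∀ i j : ℤ, adjMinor a k i j = 1)
    (htame : ∀ i j : ℤ, adjMinor a (k + 1) i j = 0) :
    ((∀ i j : ℤ, 1 ≤ (j - i) % ((n : ℤ) + (k : ℤ) + 1) →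
        (j - i) % ((n : ℤ) + (k : ℤ) + 1) ≤ (n : ℤ) → a i j ≠ 0) ↔
     (∀ i j : ℤ, 1 ≤ (j - i) % ((n : ℤ) + (k : ℤ) + 1) →
        (j - i) % ((n : ℤ) + (k : ℤ) + 1) ≤ (n : ℤ) → adjMinor a (k - 1) i j ≠ 0)) := by
  obtain ⟨m, rfl⟩ : ∃ m, k = m + 1 := ⟨k - 1, by omega⟩
  have hdual : ∀ i j, adjMinor a m i j = (-1) ^ m * a (j + m) (i - 1) :=
    adjMinor_eq_neg_one_pow_mul hSL htame hone
      (fun p c h1 h2 => apply_eq_zero_of_sub_lt_of_lt hzero hext (by push_cast; omega) h2)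
      (fun p => by simpa using apply_sub_eq_neg_one_pow hone' hext p)
  set N : ℤ := (n : ℤ) + ((m + 1 : ℕ) : ℤ) + 1 with hN
  have hreflect : ∀ x y : ℤ, x + y = -(m + 1) → 1 ≤ x % N → x % N ≤ n →
      1 ≤ y % N ∧ y % N ≤ n := fun x y hxy =>
    Int.one_le_emod_and_emod_le_of_add_eq (by omega) (by rw [hN]; push_cast; linarith)
  rw [Nat.add_sub_cancel]
  constructor
  · intro hne i j h1 h2
    obtain ⟨h1', h2'⟩ := hreflect (j - i) (i - 1 - (j + m)) (by ring) h1 h2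
    rw [hdual]
    exact mul_ne_zero (by simp) (hne _ _ h1' h2')
  · intro hne i j h1 h2 hij
    obtain ⟨h1', h2'⟩ := hreflect (j - i) (i - m - (j + 1)) (by ring) h1 h2
    have h := hne (j + 1) (i - m) h1' h2'
    rw [hdual, sub_add_cancel, add_sub_cancel_right, hij, mul_zero] at h
    exact h rfl

/-- A tame SL_k-frieze is generic if and only if it is nonzero.  In the
coordinates used here, row `i` has ones at columns `i` and `i+n+1`, zeros at the
`k-1` following columns, extension of period `n+k+1` with sign `(-1)^{k-1}`;
all adjacent `k×k` minors equal `1` and all adjacent `(k+1)×(k+1)` minors vanish.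
Interior positions are those with `(j - i) mod (n+k+1) ∈ {1, …, n}`, and these
are also the positions at which the dual frieze of `(k-1)×(k-1)` minors is
interior.  The frieze is nonzero iff all its interior entries are nonzero, and
generic iff all the `(k-1)×(k-1)` minors at interior positions are nonzero. -/
theorem tame_generic_iff_nonzero {K : Type*} [Field K] (k n : ℕ) (hk : 2 ≤ k) (hn : 1 ≤ n)
    (a : ℤ → ℤ → K)
    (hone : ∀ i : ℤ, a i i = 1)
    (hone' : ∀ i : ℤ, a i (i + ((n : ℤ) + 1)) = 1)
    (hzero : ∀ i j : ℤ, i + ((n : ℤ) + 1) < j → j < i + ((n : ℤ) + (k : ℤ) + 1) → a i j = 0)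
    (hext : ∀ i j : ℤ, a i (j + ((n : ℤ) + (k : ℤ) + 1)) = (-1 : K) ^ (k - 1) * a i j)
    (hSL : ∀ i j : ℤ, adjMinor a k i j = 1)
    (htame : ∀ i j : ℤ, adjMinor a (k + 1) i j = 0) :
    ((∀ i j : ℤ, 1 ≤ (j - i) % ((n : ℤ) + (k : ℤ) + 1) →
        (j - i) % ((n : ℤ) + (k : ℤ) + 1) ≤ (n : ℤ) → a i j ≠ 0) ↔
     (∀ i j : ℤ, 1 ≤ (j - i) % ((n : ℤ) + (k : ℤ) + 1) →
        (j - i) % ((n : ℤ) + (k : ℤ) + 1) ≤ (n : ℤ) → adjMinor a (k - 1) i j ≠ 0)) :=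
  tame_generic_iff_nonzero_general k n hk a hone hone' hzero hext hSL htame
end
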